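/- arXiv:1806.04840 — 2 statements merged into one kernel-verified Lean document; each statement's English description precedes it below -/
import Mathlib

section
/- For every LR word w, applying the ring involution A ↦ A⁻¹ of ℤ[A, A⁻¹] to ⟨Γ(w)⟩ gives ⟨Γ(i(w))⟩, where i swaps L and R in the word; i.e., ⟨Γ(i(w))⟩ = conjugate of ⟨Γ(w)⟩. -/
/-- The two-letter alphabet of LR words. -/
inductive LR
  | L : LR
  | R : LR
  deriving DecidableEq

/-- The operation `i` on LR words: swap every L with R. -/
def iop : List LR → List LR :=
  List.map fun x => match x with | LR.L => LR.R | LR.R => LR.L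

/-- `FareyPair y z x` : (y, z) are Farey neighbors p/q, r/s with q*r - p*s = 1
(positive denominators) whose mediant is x. -/
def FareyPair (y z x : ℚ) : Prop :=
  ∃ p q r s : ℤ, 0 < q ∧ 0 < s ∧ q * r - p * s = 1 ∧
    y = (p : ℚ) / q ∧ z = (r : ℚ) / s ∧ x = ((p : ℚ) + r) / ((q : ℚ) + s)

/-- The Stern–Brocot LR-word relation: `SB α w` says that w is the LR word `w(α)`
of the rational α ∈ (0,1), for the tree rooted at 1/2.  The word of 1/2 is empty,
and for a mediant x of Farey-neighbor parents (y, z) with words w₁, w₂, the word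
of x is L·w₂ if ℓ(w₁) < ℓ(w₂) and R·w₁ if ℓ(w₁) > ℓ(w₂); if the parent y (resp. z)
is the endpoint 0/1 (resp. 1/1), the word of x is L·w₂ (resp. R·w₁). -/
inductive SB : ℚ → List LR → Prop
  | half : SB (1/2) []
  | left (y z x : ℚ) (w₁ w₂ : List LR) : FareyPair y z x → SB y w₁ → SB z w₂ →
      w₁.length < w₂.length → SB x (LR.L :: w₂)
  | right (y z x : ℚ) (w₁ w₂ : List LR) : FareyPair y z x → SB y w₁ → SB z w₂ →
      w₂.length < w₁.length → SB x (LR.R :: w₁)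
  | lbase (z x : ℚ) (w₂ : List LR) : FareyPair 0 z x → SB z w₂ → SB x (LR.L :: w₂)
  | rbase (y x : ℚ) (w₁ : List LR) : FareyPair y 1 x → SB y w₁ → SB x (LR.R :: w₁)

open LaurentPolynomial

/-!
The reflection `x ↦ 1 - x` maps Farey pairs `(y, z)` to `(1 - z, 1 - y)` and so exchanges left
and right children of the Stern–Brocot tree: `SB α w` gives `SB (1 - α) (iop w)`. A word
determines its rational, hence `β = 1 - α`. The Farey recursion for `g` is invariant under
reflection combined with `A ↦ A⁻¹`, so `g (1 - x) = invert (g x)` along the whole tree.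

That a word determines its rational rests on two facts: the Farey parents of a fraction are its
unique neighbours of smaller denominator, and of two neighbouring nodes of the tree the one with
the smaller denominator has the shorter word (it is a parent of the other).
-/

theorem Int.eq_and_eq_of_mul_sub_mul_eq {a b p q p' q' : ℤ} (hab : IsCoprime a b)
    (hq : 0 ≤ q) (hqb : q < b) (hq' : 0 ≤ q') (hqb' : q' < b)
    (h : q * a - p * b = q' * a - p' * b) : q = q' ∧ p = p' := by
  have hdvd : b ∣ (q - q') * a := ⟨p - p', by linear_combination h⟩
  have hqq : q - q' = 0 :=
    Int.eq_zero_of_abs_lt_dvd (hab.symm.dvd_of_dvd_mul_right hdvd) (by rw [abs_lt]; omega)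
  refine ⟨by omega, ?_⟩
  have hpb : p * b = p' * b := by linear_combination a * hqq - h
  exact mul_right_cancel₀ (by omega) hpb

theorem Rat.num_den_of_div {p q : ℤ} (hq : 0 < q) (hpq : IsCoprime p q) :
    ((p : ℚ) / q).num = p ∧ (((p : ℚ) / q).den : ℤ) = q := by
  have hcop : Nat.Coprime p.natAbs q.natAbs := Int.isCoprime_iff_gcd_eq_one.mp hpq
  exact ⟨Rat.num_div_eq_of_coprime hq hcop, Rat.den_div_eq_of_coprime hq hcop⟩

/-- `a < b` are neighbours in some Farey sequence. -/
def FareyNeighbors (a b : ℚ) : Prop :=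
  (a.den : ℤ) * b.num - a.num * b.den = 1

def mediant (a b : ℚ) : ℚ :=
  (a.num + b.num : ℚ) / (a.den + b.den)

theorem fareyPair_iff {y z x : ℚ} : FareyPair y z x ↔ FareyNeighbors y z ∧ x = mediant y z := by
  constructor
  · rintro ⟨p, q, r, s, hq, hs, hd, rfl, rfl, rfl⟩
    obtain ⟨hp, hq'⟩ := Rat.num_den_of_div (p := p) hq ⟨-s, r, by linear_combination hd⟩
    obtain ⟨hr, hs'⟩ := Rat.num_den_of_div (p := r) hs ⟨q, -p, by linear_combination hd⟩
    refine ⟨by rw [FareyNeighbors, hp, hq', hr, hs', hd], ?_⟩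
    have hqQ : (((p : ℚ) / q).den : ℚ) = q := by exact_mod_cast hq'
    have hsQ : (((r : ℚ) / s).den : ℚ) = s := by exact_mod_cast hs'
    rw [mediant, hp, hr, hqQ, hsQ]
  · rintro ⟨hn, rfl⟩
    exact ⟨y.num, y.den, z.num, z.den, by positivity, by positivity, hn,
      (Rat.num_div_den y).symm, (Rat.num_div_den z).symm, rfl⟩

namespace FareyNeighbors

variable {a b x : ℚ}

theorem mediant_num_den (h : FareyNeighbors a b) :
    (mediant a b).num = a.num + b.num ∧ ((mediant a b).den : ℤ) = a.den + b.den := by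
  have hcast : mediant a b = ((a.num + b.num : ℤ) : ℚ) / ((a.den + b.den : ℤ) : ℚ) := by
    push_cast; rfl
  unfold FareyNeighbors at h
  rw [hcast]
  exact Rat.num_den_of_div (by positivity) ⟨a.den, -a.num, by linear_combination h⟩

theorem eq_of_den_lt_left {a' : ℚ} (h : FareyNeighbors a x) (h' : FareyNeighbors a' x)
    (ha : a.den < x.den) (ha' : a'.den < x.den) : a = a' := by
  unfold FareyNeighbors at h h'
  obtain ⟨hden, hnum⟩ := Int.eq_and_eq_of_mul_sub_mul_eq (a := x.num) (b := x.den)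
    (q := a.den) (q' := a'.den) (p := a.num) (p' := a'.num)
    ⟨a.den, -a.num, by linear_combination h⟩ (by positivity) (by exact_mod_cast ha)
    (by positivity) (by exact_mod_cast ha') (h.trans h'.symm)
  exact Rat.ext hnum (by exact_mod_cast hden)

theorem eq_of_den_lt_right {b' : ℚ} (h : FareyNeighbors x b) (h' : FareyNeighbors x b')
    (hb : b.den < x.den) (hb' : b'.den < x.den) : b = b' := by
  unfold FareyNeighbors at h h'
  obtain ⟨hden, hnum⟩ := Int.eq_and_eq_of_mul_sub_mul_eq (a := x.num) (b := x.den)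
    (q := b.den) (q' := b'.den) (p := b.num) (p' := b'.num)
    ⟨-b.den, b.num, by linear_combination h⟩ (by positivity) (by exact_mod_cast hb)
    (by positivity) (by exact_mod_cast hb') (by linear_combination h' - h)
  exact Rat.ext hnum (by exact_mod_cast hden)

theorem den_eq_one_of_den_eq (h : FareyNeighbors a b) (hab : a.den = b.den) : b.den = 1 := by
  unfold FareyNeighbors at h
  rw [hab] at h
  have hmul : (b.den : ℤ) * (b.num - a.num) = 1 := by linear_combination h
  exact_mod_cast Int.eq_one_of_mul_eq_one_right (by positivity) hmul

end FareyNeighbors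

namespace FareyPair

variable {y z x : ℚ}

theorem neighbors (h : FareyPair y z x) :
    FareyNeighbors y x ∧ FareyNeighbors x z ∧ y.den < x.den ∧ z.den < x.den := by
  obtain ⟨hn, rfl⟩ := fareyPair_iff.mp h
  obtain ⟨hnum, hden⟩ := hn.mediant_num_den
  unfold FareyNeighbors at hn ⊢
  refine ⟨?_, ?_, ?_, ?_⟩
  · rw [hnum, hden]; linear_combination hn
  · rw [hnum, hden]; linear_combination hn
  · have : (0 : ℤ) < z.den := by positivity
    omega
  · have : (0 : ℤ) < y.den := by positivity
    omega

theorem lt (h : FareyPair y z x) : y < x ∧ x < z := by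
  obtain ⟨p, q, r, s, hq, hs, hd, rfl, rfl, rfl⟩ := h
  have hqQ : (0 : ℚ) < q := by exact_mod_cast hq
  have hsQ : (0 : ℚ) < s := by exact_mod_cast hs
  have hdQ : (q : ℚ) * r - p * s = 1 := by exact_mod_cast hd
  constructor
  · rw [div_lt_div_iff₀ hqQ (by positivity)]; nlinarith
  · rw [div_lt_div_iff₀ (by positivity) hsQ]; nlinarith

theorem unique {y' z' : ℚ} (h : FareyPair y z x) (h' : FareyPair y' z' x) : y = y' ∧ z = z' := by
  obtain ⟨hy, hz, hyd, hzd⟩ := h.neighbors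
  obtain ⟨hy', hz', hyd', hzd'⟩ := h'.neighbors
  exact ⟨hy.eq_of_den_lt_left hy' hyd hyd', hz.eq_of_den_lt_right hz' hzd hzd'⟩

theorem eq_right_of_neighbors {c : ℚ} (h : FareyPair y z x) (hc : FareyNeighbors x c)
    (hcd : c.den < x.den) : c = z :=
  hc.eq_of_den_lt_right h.neighbors.2.1 hcd h.neighbors.2.2.2

theorem eq_of_den_lt_left {y' x' : ℚ} (h : FareyPair y z x) (h' : FareyPair y' z x')
    (hy : y.den < z.den) (hy' : y'.den < z.den) : x = x' := by
  obtain ⟨hn, rfl⟩ := fareyPair_iff.mp h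
  obtain ⟨hn', rfl⟩ := fareyPair_iff.mp h'
  rw [hn.eq_of_den_lt_left hn' hy hy']

theorem eq_of_den_lt_right {z' x' : ℚ} (h : FareyPair y z x) (h' : FareyPair y z' x')
    (hz : z.den < y.den) (hz' : z'.den < y.den) : x = x' := by
  obtain ⟨hn, rfl⟩ := fareyPair_iff.mp h
  obtain ⟨hn', rfl⟩ := fareyPair_iff.mp h'
  rw [hn.eq_of_den_lt_right hn' hz hz']

theorem one_sub (h : FareyPair y z x) : FareyPair (1 - z) (1 - y) (1 - x) := by
  obtain ⟨p, q, r, s, hq, hs, hd, rfl, rfl, rfl⟩ := h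
  have hqQ : (q : ℚ) ≠ 0 := by positivity
  have hsQ : (s : ℚ) ≠ 0 := by positivity
  have hqsQ : (q : ℚ) + s ≠ 0 := by positivity
  refine ⟨s - r, s, q - p, q, hs, hq, by linear_combination hd, ?_, ?_, ?_⟩
  · push_cast; field_simp
  · push_cast; field_simp
  · push_cast; field_simp; ring

end FareyPair

theorem fareyPair_zero_one_half : FareyPair 0 1 (1 / 2) :=
  ⟨0, 1, 1, 1, one_pos, one_pos, by norm_num, by norm_num, by norm_num, by norm_num⟩

namespace SB

variable {x y z : ℚ} {v w : List LR}

theorem pos_lt_one (h : SB x w) : 0 < x ∧ x < 1 := by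
  induction h with
  | half => norm_num
  | left _ _ _ _ _ hp _ _ _ ihy ihz => exact ⟨ihy.1.trans hp.lt.1, hp.lt.2.trans ihz.2⟩
  | right _ _ _ _ _ hp _ _ _ ihy ihz => exact ⟨ihy.1.trans hp.lt.1, hp.lt.2.trans ihz.2⟩
  | lbase _ _ _ hp _ ihz => exact ⟨hp.lt.1, hp.lt.2.trans ihz.2⟩
  | rbase _ _ _ hp _ ihy => exact ⟨ihy.1.trans hp.lt.1, hp.lt.2⟩

theorem ne_zero (h : SB x w) : x ≠ 0 :=
  h.pos_lt_one.1.ne'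

theorem ne_one (h : SB x w) : x ≠ 1 :=
  h.pos_lt_one.2.ne

theorem one_lt_den (h : SB x w) : 1 < x.den := by
  obtain ⟨h0, h1⟩ := h.pos_lt_one
  by_contra hle
  have hint : (x.num : ℚ) = x := (Rat.den_eq_one_iff x).mp (by have := x.den_pos; omega)
  rw [← hint] at h0 h1
  have : 0 < x.num := by exact_mod_cast h0
  have : x.num < 1 := by exact_mod_cast h1
  omega

theorem exists_fareyPair (h : SB x w) : ∃ y z, FareyPair y z x := by
  cases h with
  | half => exact ⟨0, 1, fareyPair_zero_one_half⟩
  | left y z _ _ _ hp => exact ⟨y, z, hp⟩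
  | right y z _ _ _ hp => exact ⟨y, z, hp⟩
  | lbase z _ _ hp => exact ⟨0, z, hp⟩
  | rbase y _ _ hp => exact ⟨y, 1, hp⟩

theorem one_sub (h : SB x w) : SB (1 - x) (iop w) := by
  induction h with
  | half =>
    rw [show (1 : ℚ) - 1 / 2 = 1 / 2 by norm_num]
    exact .half
  | left y z x w₁ w₂ hp _ _ hl ihy ihz =>
    exact .right _ _ _ _ _ hp.one_sub ihz ihy (by simpa [iop] using hl)
  | right y z x w₁ w₂ hp _ _ hl ihy ihz =>
    exact .left _ _ _ _ _ hp.one_sub ihz ihy (by simpa [iop] using hl)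
  | lbase z x w₂ hp _ ihz => exact .rbase _ _ _ (by simpa using hp.one_sub) ihz
  | rbase y x w₁ hp _ ihy => exact .lbase _ _ _ (by simpa using hp.one_sub) ihy

theorem view (h : SB x w) (hp : FareyPair y z x) :
    (w = [] ∧ y = 0 ∧ z = 1) ∨
    (∃ w₂, w = LR.L :: w₂ ∧ SB z w₂ ∧ (y = 0 ∨ ∃ w₁, SB y w₁ ∧ w₁.length < w₂.length)) ∨
    (∃ w₁, w = LR.R :: w₁ ∧ SB y w₁ ∧ (z = 1 ∨ ∃ w₂, SB z w₂ ∧ w₂.length < w₁.length)) := by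
  cases h with
  | half =>
    obtain ⟨rfl, rfl⟩ := fareyPair_zero_one_half.unique hp
    exact .inl ⟨rfl, rfl, rfl⟩
  | left _ _ _ w₁ w₂ hp' hy hz hl =>
    obtain ⟨rfl, rfl⟩ := hp'.unique hp
    exact .inr (.inl ⟨w₂, rfl, hz, .inr ⟨w₁, hy, hl⟩⟩)
  | right _ _ _ w₁ w₂ hp' hy hz hl =>
    obtain ⟨rfl, rfl⟩ := hp'.unique hp
    exact .inr (.inr ⟨w₁, rfl, hy, .inr ⟨w₂, hz, hl⟩⟩)
  | lbase _ _ w₂ hp' hz =>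
    obtain ⟨rfl, rfl⟩ := hp'.unique hp
    exact .inr (.inl ⟨w₂, rfl, hz, .inl rfl⟩)
  | rbase _ _ w₁ hp' hy =>
    obtain ⟨rfl, rfl⟩ := hp'.unique hp
    exact .inr (.inr ⟨w₁, rfl, hy, .inl rfl⟩)

theorem functional {w' : List LR} (h : SB x w) (h' : SB x w') : w = w' := by
  induction h generalizing w' with
  | half =>
    rcases h'.view fareyPair_zero_one_half with ⟨rfl, -⟩ | ⟨_, -, hz, -⟩ | ⟨_, -, hy, -⟩
    · rfl
    · exact (hz.ne_one rfl).elim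
    · exact (hy.ne_zero rfl).elim
  | left _ _ _ _ _ hp hy hz hl ihy ihz =>
    rcases h'.view hp with ⟨-, rfl, -⟩ | ⟨_, rfl, hz', -⟩ | ⟨_, rfl, hy', rfl | ⟨_, hz', hl'⟩⟩
    · exact (hy.ne_zero rfl).elim
    · rw [ihz hz']
    · exact (hz.ne_one rfl).elim
    · rw [ihy hy', ihz hz'] at hl
      omega
  | right _ _ _ _ _ hp hy hz hl ihy ihz =>
    rcases h'.view hp with ⟨-, rfl, -⟩ | ⟨_, rfl, hz', rfl | ⟨_, hy', hl'⟩⟩ | ⟨_, rfl, hy', -⟩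
    · exact (hy.ne_zero rfl).elim
    · exact (hy.ne_zero rfl).elim
    · rw [ihy hy', ihz hz'] at hl
      omega
    · rw [ihy hy']
  | lbase _ _ _ hp hz ihz =>
    rcases h'.view hp with ⟨-, -, rfl⟩ | ⟨_, rfl, hz', -⟩ | ⟨_, rfl, hy', -⟩
    · exact (hz.ne_one rfl).elim
    · rw [ihz hz']
    · exact (hy'.ne_zero rfl).elim
  | rbase _ _ _ hp hy ihy =>
    rcases h'.view hp with ⟨-, rfl, -⟩ | ⟨_, rfl, hz', -⟩ | ⟨_, rfl, hy', -⟩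
    · exact (hy.ne_zero rfl).elim
    · exact (hz'.ne_one rfl).elim
    · rw [ihy hy']

theorem length_lt_of_right_neighbor (hy : SB y v) (hz : SB z w) (hn : FareyNeighbors y z)
    (hd : z.den < y.den) : w.length < v.length := by
  obtain ⟨a, b, hp⟩ := hy.exists_fareyPair
  obtain rfl := hp.eq_right_of_neighbors hn hd
  rcases hy.view hp with ⟨-, -, rfl⟩ | ⟨w₂, rfl, hb, -⟩ | ⟨w₁, rfl, -, rfl | ⟨w₂, hb, hl⟩⟩
  · exact (hz.ne_one rfl).elim
  · simp [hz.functional hb]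
  · exact (hz.ne_one rfl).elim
  · simp only [hz.functional hb, List.length_cons]
    omega

theorem den_lt_of_left_parent (hz : SB z w) (hp : FareyPair y z x)
    (hy : y = 0 ∨ ∃ v, SB y v ∧ v.length < w.length) : y.den < z.den := by
  rcases hy with rfl | ⟨v, hy, hl⟩
  · simpa using hz.one_lt_den
  have hn := (fareyPair_iff.mp hp).1
  rcases lt_trichotomy y.den z.den with hd | hd | hd
  · exact hd
  · exact absurd (hn.den_eq_one_of_den_eq hd) hz.one_lt_den.ne'
  · exact absurd (hy.length_lt_of_right_neighbor hz hn hd) (by omega)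

theorem den_lt_of_right_parent (hy : SB y v) (hp : FareyPair y z x)
    (hz : z = 1 ∨ ∃ w, SB z w ∧ w.length < v.length) : z.den < y.den := by
  have hz' : 1 - z = 0 ∨ ∃ w, SB (1 - z) w ∧ w.length < (iop v).length := by
    rcases hz with rfl | ⟨w, hz, hl⟩
    · exact .inl (sub_self 1)
    · exact .inr ⟨iop w, hz.one_sub, by simpa [iop] using hl⟩
  simpa [Rat.intCast_sub_den] using hy.one_sub.den_lt_of_left_parent hp.one_sub hz'

theorem of_cons_L (h : SB x (LR.L :: w)) :
    ∃ y z, FareyPair y z x ∧ SB z w ∧ (y = 0 ∨ ∃ v, SB y v ∧ v.length < w.length) := by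
  cases h with
  | left y z _ w₁ _ hp hy hz hl => exact ⟨y, z, hp, hz, .inr ⟨w₁, hy, hl⟩⟩
  | lbase z _ _ hp hz => exact ⟨0, z, hp, hz, .inl rfl⟩

theorem of_cons_R (h : SB x (LR.R :: w)) :
    ∃ y z, FareyPair y z x ∧ SB y w ∧ (z = 1 ∨ ∃ v, SB z v ∧ v.length < w.length) := by
  cases h with
  | right y z _ _ w₂ hp hy hz hl => exact ⟨y, z, hp, hy, .inr ⟨w₂, hz, hl⟩⟩
  | rbase y _ _ hp hy => exact ⟨y, 1, hp, hy, .inl rfl⟩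

theorem injective {x' : ℚ} (h : SB x w) (h' : SB x' w) : x = x' := by
  induction w generalizing x x' with
  | nil =>
    cases h
    cases h'
    rfl
  | cons a w ih =>
    cases a
    · obtain ⟨y, z, hp, hz, hy⟩ := h.of_cons_L
      obtain ⟨y', z', hp', hz', hy'⟩ := h'.of_cons_L
      obtain rfl := ih hz hz'
      exact hp.eq_of_den_lt_left hp' (hz.den_lt_of_left_parent hp hy)
        (hz.den_lt_of_left_parent hp' hy')
    · obtain ⟨y, z, hp, hy, hz⟩ := h.of_cons_R
      obtain ⟨y', z', hp', hy', hz'⟩ := h'.of_cons_R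
      obtain rfl := ih hy hy'
      exact hp.eq_of_den_lt_right hp' (hy.den_lt_of_right_parent hp hz)
        (hy.den_lt_of_right_parent hp' hz')

end SB

section Bracket

variable {g : ℚ → LaurentPolynomial ℤ}

theorem bracket_one_sub_of_fareyPair
    (hrec : ∀ x y z : ℚ, FareyPair y z x → g x = -T 4 * g y - T (-4) * g z)
    {x y z : ℚ} (hp : FareyPair y z x)
    (hy : g (1 - y) = invert (g y)) (hz : g (1 - z) = invert (g z)) :
    g (1 - x) = invert (g x) := by
  rw [hrec x y z hp, hrec _ _ _ hp.one_sub, hy, hz]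
  simp only [map_sub, map_neg, map_mul, invert_T, neg_neg]
  ring

theorem bracket_one_sub
    (hrec : ∀ x y z : ℚ, FareyPair y z x → g x = -T 4 * g y - T (-4) * g z)
    (h0 : g 0 = 1) (h1 : g 1 = 1) (hhalf : g (1 / 2) = -T 4 - T (-4))
    {x : ℚ} {w : List LR} (h : SB x w) : g (1 - x) = invert (g x) := by
  have hzero : g (1 - 0) = invert (g 0) := by simp [h0, h1]
  have hone : g (1 - 1) = invert (g 1) := by simp [h0, h1]
  induction h with
  | half =>
    rw [show (1 : ℚ) - 1 / 2 = 1 / 2 by norm_num, hhalf]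
    simp only [map_sub, map_neg, invert_T, neg_neg]
    ring
  | left _ _ _ _ _ hp _ _ _ ihy ihz => exact bracket_one_sub_of_fareyPair hrec hp ihy ihz
  | right _ _ _ _ _ hp _ _ _ ihy ihz => exact bracket_one_sub_of_fareyPair hrec hp ihy ihz
  | lbase _ _ _ hp _ ihz => exact bracket_one_sub_of_fareyPair hrec hp hzero ihz
  | rbase _ _ _ hp _ ihy => exact bracket_one_sub_of_fareyPair hrec hp ihy hone

end Bracket

theorem Gamma_iop_invert_general (g : ℚ → LaurentPolynomial ℤ)
    (h0 : g 0 = 1) (h1 : g 1 = 1)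
    (hhalf : g (1/2) = -T 4 - T (-4))
    (hrec : ∀ x y z : ℚ, FareyPair y z x → g x = -T 4 * g y - T (-4) * g z)
    (w : List LR) (α β : ℚ) (hα : SB α w) (hβ : SB β (iop w)) :
    g β = invert (g α) := by
  rw [hβ.injective hα.one_sub]
  exact bracket_one_sub hrec h0 h1 hhalf hα

/-- The Kauffman bracket of Conway-Coxeter friezes, as a function g = v∘φ on the
rationals in [0,1] (so that ⟨Γ(w)⟩ = g(α) when w is the LR word of α), satisfies
g(0) = g(1) = 1, the base cases ⟨Γ(ε)⟩ = g(1/2) = -A⁴ - A⁻⁴,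
⟨Γ(L)⟩ = g(1/3) = -A⁴ + 1 + A⁻⁸, ⟨Γ(R)⟩ = g(2/3) = A⁸ + 1 - A⁻⁴, and the Farey-sum
recursion g(x) = -A⁴ g(y) - A⁻⁴ g(z) for parents (y,z) of x.  For any such g,
applying the ring involution A ↦ A⁻¹ (`invert`) to ⟨Γ(w)⟩ gives ⟨Γ(i(w))⟩, where
i swaps L and R. -/
theorem Gamma_iop_invert (g : ℚ → LaurentPolynomial ℤ)
    (h0 : g 0 = 1) (h1 : g 1 = 1)
    (hhalf : g (1/2) = -T 4 - T (-4))
    (hthird : g (1/3) = -T 4 + 1 + T (-8))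
    (h23 : g (2/3) = T 8 + 1 - T (-4))
    (hrec : ∀ x y z : ℚ, FareyPair y z x → g x = -T 4 * g y - T (-4) * g z)
    (w : List LR) (α β : ℚ) (hα : SB α w) (hβ : SB β (iop w)) :
    g β = invert (g α) :=
  Gamma_iop_invert_general g h0 h1 hhalf hrec w α β hα hβ
end

section
/- Define v(φ(α)) ∈ ℤ[A, A⁻¹] for α ∈ ℚ ∩ (0,1] ∪ {0} by v(φ(0)) = 1, v(φ(1)) computed from the parents recursion, base values at 1/2, and the recursion v(φ(x)) = -A⁴ v(φ(y)) - A⁻⁴ v(φ(z)) for parents (y,z). Then for every irreducible fraction p/q with 1 ≤ p ≤ q, substituting A = ω for ω a primitive 8th root of unity yields v(φ(p/q))(ω) = q. -/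
open LaurentPolynomial

/-! At a primitive 8th root of unity `ω` we have `ω⁴ = -1`, so the recursion becomes
`v(x) = v(y) + v(z)`, with `v(0) = 1` and `v(∞) = -ω⁸ - ω⁴ = 0`. A function that is additive over
Farey mediants takes the value `q • v(0) + p • v(∞)` at `p/q`, by induction down the
Stern–Brocot tree. -/

/-- The fraction p/q viewed in ℚ₊ ∪ {∞}, with p/0 = ∞. -/
def toW (p q : ℕ) : WithTop ℚ≥0 := if q = 0 then ⊤ else (((p : ℚ≥0) / q : ℚ≥0) : WithTop ℚ≥0)

/-- `IsParents y z x` : (y, z) are Farey neighbors (q*r - p*s = 1, with 1/0 = ∞ allowed)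
whose mediant is x. -/
def IsParents (y z x : WithTop ℚ≥0) : Prop :=
  ∃ p q r s : ℕ, q * r = p * s + 1 ∧ y = toW p q ∧ z = toW r s ∧ x = toW (p + r) (q + s)

theorem Nat.coprime_and_coprime_of_mul_eq_mul_add_one {a b c d : ℕ} (h : b * c = a * d + 1) :
    a.Coprime b ∧ c.Coprime d := by
  have hZ : (b : ℤ) * c = a * d + 1 := by exact_mod_cast h
  exact ⟨Nat.isCoprime_iff_coprime.mp ⟨-d, c, by linear_combination hZ⟩,
    Nat.isCoprime_iff_coprime.mp ⟨b, -a, by linear_combination hZ⟩⟩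

/-- The unimodular maps `(p, q) ↦ (p, q + p)` and `(p, q) ↦ (p + q, q)` carry Farey neighbours to
Farey neighbours, so parents are found by descending along Euclid's algorithm. -/
theorem exists_farey_parents {p q : ℕ} (hpq : p.Coprime q) (h2 : 2 ≤ p + q) :
    ∃ a b c d : ℕ, b * c = a * d + 1 ∧ a + c = p ∧ b + d = q := by
  induction hn : p + q using Nat.strong_induction_on generalizing p q with
  | _ n ih =>
  subst hn
  rcases lt_trichotomy p q with hlt | rfl | hgt
  · have hp : p ≠ 0 := by rintro rfl; simp_all
    obtain ⟨a, b, c, d, h, rfl, hbd⟩ :=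
      ih (p + (q - p)) (by omega) ((Nat.coprime_sub_self_right hlt.le).mpr hpq) (by omega) rfl
    exact ⟨a, a + b, c, c + d, by rw [add_mul, h]; ring, rfl, by omega⟩
  · obtain rfl : p = 1 := by simpa using hpq
    exact ⟨0, 1, 1, 0, rfl, rfl, rfl⟩
  · have hq : q ≠ 0 := by rintro rfl; simp_all
    obtain ⟨a, b, c, d, h, hac, rfl⟩ :=
      ih (p - q + q) (by omega) ((Nat.coprime_sub_self_left hgt.le).mpr hpq) (by omega) rfl
    exact ⟨a + b, b, c + d, d, by rw [mul_add, h]; ring, by omega, rfl⟩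

theorem isParents_toW {a b c d : ℕ} (h : b * c = a * d + 1) :
    IsParents (toW a b) (toW c d) (toW (a + c) (b + d)) :=
  ⟨a, b, c, d, h, rfl, rfl, rfl⟩

theorem apply_toW_eq_of_mediant_additive {M : Type*} [AddCommMonoid M] {f : WithTop ℚ≥0 → M}
    (hf : ∀ x y z, IsParents y z x → f x = f y + f z) {p q : ℕ} (hpq : p.Coprime q) :
    f (toW p q) = q • f 0 + p • f ⊤ := by
  induction hn : p + q using Nat.strong_induction_on generalizing p q with
  | _ n ih =>
  subst hn
  by_cases h2 : 2 ≤ p + q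
  · obtain ⟨a, b, c, d, h, rfl, rfl⟩ := exists_farey_parents hpq h2
    obtain ⟨hab, hcd⟩ := Nat.coprime_and_coprime_of_mul_eq_mul_add_one h
    have hb : b ≠ 0 := by rintro rfl; simp at h
    have hc : c ≠ 0 := by rintro rfl; simp at h
    rw [hf _ _ _ (isParents_toW h), ih _ (by omega) hab rfl, ih _ (by omega) hcd rfl]
    simp only [add_nsmul]
    abel
  · obtain ⟨rfl, rfl⟩ | ⟨rfl, rfl⟩ : (p = 0 ∧ q = 1) ∨ (p = 1 ∧ q = 0) := by
      have hp : p ≤ 1 := by omega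
      have hq : q ≤ 1 := by omega
      interval_cases p <;> interval_cases q <;> simp_all
    all_goals simp [toW]

theorem LaurentPolynomial.map_T_eq_zpow {R K : Type*} [Semiring R] [DivisionRing K]
    (f : R[T;T⁻¹] →+* K) (n : ℤ) : f (T n) = f (T 1) ^ n := by
  have hunit : f (T 1) * f (T (-1)) = 1 := by rw [← map_mul, ← T_add]; simp
  have hne : f (T 1) ≠ 0 := left_ne_zero_of_mul_eq_one hunit
  induction n using Int.induction_on with
  | zero => simp
  | succ k ih => rw [T_add, map_mul, ih, zpow_add_one₀ hne]
  | pred k ih =>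
    rw [zpow_sub_one₀ hne, ← ih, eq_mul_inv_iff_mul_eq₀ hne, ← map_mul, ← T_add]
    simp

theorem v_phi_at_eighth_root_general (vφ : WithTop ℚ≥0 → LaurentPolynomial ℤ)
    (h0 : vφ 0 = 1) (hinf : vφ ⊤ = T 6 * (-T 2 - T (-2)))
    (hrec : ∀ x y z, IsParents y z x → vφ x = -T 4 * vφ y - T (-4) * vφ z)
    (p q : ℕ) (hcop : Nat.Coprime p q)
    (ω : ℂ) (hω : IsPrimitiveRoot ω 8)
    (ev : LaurentPolynomial ℤ →+* ℂ) (hev : ev (T 1) = ω) :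
    ev (vφ (toW p q)) = (q : ℂ) := by
  have hω4 : ω ^ 4 = -1 :=
    (hω.pow_of_dvd (p := 4) (by norm_num) (by norm_num)).eq_neg_one_of_two_right
  have hT4 : ev (T 4) = -1 := by rw [map_T_eq_zpow, hev]; exact_mod_cast hω4
  have hTm4 : ev (T (-4)) = -1 := by rw [map_T_eq_zpow, hev, zpow_neg]; norm_cast; simp [hω4]
  have hinf0 : ev (vφ ⊤) = 0 := by
    rw [hinf]
    simp only [map_mul, map_sub, map_neg, map_T_eq_zpow, hev]
    rw [zpow_neg]
    norm_cast
    field_simp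
    linear_combination (-ω ^ 4) * hω4
  have hmediant : ∀ x y z, IsParents y z x → ev (vφ x) = ev (vφ y) + ev (vφ z) := by
    intro x y z h
    rw [hrec x y z h, map_sub, map_mul, map_mul, map_neg, hT4, hTm4]
    ring
  rw [apply_toW_eq_of_mediant_additive hmediant hcop, h0, hinf0]
  simp

/-- Let v∘φ satisfy v(φ(0)) = 1, v(φ(∞)) = A⁶·(-A² - A⁻²) and
v(φ(x)) = -A⁴·v(φ(y)) - A⁻⁴·v(φ(z)) for x the mediant of its parents (y,z).
Then for every irreducible fraction p/q with 1 ≤ p ≤ q, substituting a primitive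
8th root of unity ω for A yields v(φ(p/q))(ω) = q. -/
theorem v_phi_at_eighth_root (vφ : WithTop ℚ≥0 → LaurentPolynomial ℤ)
    (h0 : vφ 0 = 1) (hinf : vφ ⊤ = T 6 * (-T 2 - T (-2)))
    (hrec : ∀ x y z, IsParents y z x → vφ x = -T 4 * vφ y - T (-4) * vφ z)
    (p q : ℕ) (hp : 1 ≤ p) (hpq : p ≤ q) (hcop : Nat.Coprime p q)
    (ω : ℂ) (hω : IsPrimitiveRoot ω 8)
    (ev : LaurentPolynomial ℤ →+* ℂ) (hev : ev (T 1) = ω) :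
    ev (vφ (toW p q)) = (q : ℂ) :=
  v_phi_at_eighth_root_general vφ h0 hinf hrec p q hcop ω hω ev hev
end
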